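/- arXiv:2508.12173 — 4 statements merged into one kernel-verified Lean document; each statement's English description precedes it below -/
import Mathlib

section
/- Let f be a natural number, let U be a finite type of replicas with exactly 3f+1 elements, let B ⊆ U with |B| ≤ f be the Byzantine replicas, and let V be a type of block values. Suppose vote : U → V records the (unique) vote cast by each replica in some view. If S₁, S₂ ⊆ U are finite subsets each of cardinality at least 2f+1, and there are values c₁, c₂ ∈ V such that every replica r ∈ S₁ with r ∉ B satisfies vote r = c₁ and every replica r ∈ S₂ with r ∉ B satisfies vote r = c₂, then c₁ = c₂. -/
theorem no_equivocation
    (f : ℕ) (U : Type*) [Fintype U] [DecidableEq U]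
    (hU : Fintype.card U = 3 * f + 1)
    (B : Finset U) (hB : B.card ≤ f)
    (V : Type*) (vote : U → V)
    (S₁ S₂ : Finset U) (h1 : 2 * f + 1 ≤ S₁.card) (h2 : 2 * f + 1 ≤ S₂.card)
    (c₁ c₂ : V)
    (hv1 : ∀ r ∈ S₁, r ∉ B → vote r = c₁)
    (hv2 : ∀ r ∈ S₂, r ∉ B → vote r = c₂) :
    c₁ = c₂ := by
  have hunion : (S₁ ∪ S₂).card ≤ 3 * f + 1 := hU ▸ Finset.card_le_univ _
  have hint : f + 1 ≤ (S₁ ∩ S₂).card := by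
    have := Finset.card_union_add_card_inter S₁ S₂
    omega
  have hne : ((S₁ ∩ S₂) \ B).Nonempty := by
    rw [← Finset.card_pos]
    have := Finset.le_card_sdiff B (S₁ ∩ S₂)
    omega
  obtain ⟨r, hr⟩ := hne
  rw [Finset.mem_sdiff, Finset.mem_inter] at hr
  rw [← hv1 r hr.1.1 hr.2, hv2 r hr.1.2 hr.2]
end

section
/- Let f be a natural number with f ≥ 1, and let B ⊆ ZMod (3f+1) be a finite set with |B| ≤ f. Then there exists i ∈ ZMod (3f+1) such that i ∉ B, i+1 ∉ B, and i+2 ∉ B. -/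
theorem three_consecutive_honest_leaders
    (f : ℕ) (hf : 1 ≤ f)
    (B : Finset (ZMod (3 * f + 1))) (hB : B.card ≤ f) :
    ∃ i : ZMod (3 * f + 1), i ∉ B ∧ i + 1 ∉ B ∧ i + 2 ∉ B := by
  have : NeZero (3 * f + 1) := ⟨Nat.succ_ne_zero _⟩
  set C : Finset (ZMod (3 * f + 1)) :=
    B ∪ B.image (· - 1) ∪ B.image (· - 2) with hC
  have hCcard : C.card < Finset.univ.card (α := ZMod (3 * f + 1)) := by
    have h1 : C.card ≤ B.card + B.card + B.card := by
      calc C.card ≤ (B ∪ B.image (· - 1)).card + (B.image (· - 2)).card :=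
            Finset.card_union_le _ _
        _ ≤ B.card + (B.image (· - 1)).card + (B.image (· - 2)).card :=
            Nat.add_le_add_right (Finset.card_union_le _ _) _
        _ ≤ B.card + B.card + B.card := by
            have h2 := Finset.card_image_le (f := (· - 1)) (s := B)
            have h3 := Finset.card_image_le (f := (· - 2)) (s := B)
            omega
    have hcard : Finset.univ.card (α := ZMod (3 * f + 1)) = 3 * f + 1 := by
      simp [Finset.card_univ, ZMod.card]
    omega
  obtain ⟨i, hi⟩ : ∃ i, i ∉ C := by
    by_contra h
    push_neg at h
    have := Finset.card_le_card (fun x _ => h x : Finset.univ ⊆ C)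
    omega
  simp only [hC, Finset.mem_union, Finset.mem_image, not_or, not_exists, not_and] at hi
  obtain ⟨⟨hi0, hi1⟩, hi2⟩ := hi
  refine ⟨i, hi0, fun h => hi1 (i + 1) h (by ring), fun h => hi2 (i + 2) h (by ring)⟩
end

section
/- Let f be a natural number with f ≥ 1, let B ⊆ Fin (3f+1) be a finite set with |B| ≤ f, and define the leader of view v ∈ ℕ to be v mod (3f+1). Then for every a ∈ ℕ there exists a view v with a ≤ v and v+2 ≤ a + 3f + 2 such that the leaders of views v, v+1, and v+2 are all outside B. -/
/-! Take the `3f+1` consecutive starts `v ∈ [a, a+3f]`. For each offset `i ∈ {0,1,2}` the views `v+i`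
are again `3f+1` consecutive views, so their leaders are pairwise distinct and each Byzantine replica
spoils at most one start through that offset. Hence at most `3f` starts are spoiled, and one is not. -/

/-- The leader of view `v` under round-robin rotation among `3f+1` replicas. -/
def leader (f : ℕ) (v : ℕ) : Fin (3 * f + 1) :=
  ⟨v % (3 * f + 1), Nat.mod_lt _ (by omega)⟩

open Finset

theorem leader_injOn_Ico (f a : ℕ) : Set.InjOn (leader f) (Ico a (a + (3 * f + 1))) :=
  fun _ hv _ hw hvw => Nat.mod_injOn_Ico a (3 * f + 1) hv hw (congrArg Fin.val hvw)

theorem exists_mem_Ico_forall_add_notMem {α : Type*} [DecidableEq α] (ℓ : ℕ → α) {n : ℕ}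
    (hℓ : ∀ b, Set.InjOn ℓ (Ico b (b + n))) (B : Finset α) {k : ℕ} (hk : k * #B < n) (a : ℕ) :
    ∃ v ∈ Ico a (a + n), ∀ i < k, ℓ (v + i) ∉ B := by
  set spoiled : ℕ → Finset ℕ := fun i => {v ∈ Ico a (a + n) | ℓ (v + i) ∈ B}
  have card_spoiled (i : ℕ) : #(spoiled i) ≤ #B := by
    refine card_le_card_of_injOn (fun v => ℓ (v + i)) (fun v hv => (mem_filter.1 hv).2) ?_
    intro v hv w hw hvw
    have shift {u : ℕ} (hu : u ∈ spoiled i) : u + i ∈ Ico (a + i) (a + i + n) := by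
      have := mem_Ico.1 (mem_filter.1 hu).1
      exact mem_Ico.2 ⟨by omega, by omega⟩
    exact Nat.add_right_cancel (hℓ (a + i) (shift hv) (shift hw) hvw)
  have card_all_spoiled : #((range k).biUnion spoiled) < #(Ico a (a + n)) :=
    calc #((range k).biUnion spoiled)
        ≤ ∑ i ∈ range k, #(spoiled i) := card_biUnion_le
      _ ≤ ∑ _i ∈ range k, #B := sum_le_sum fun i _ => card_spoiled i
      _ < #(Ico a (a + n)) := by simpa using hk
  obtain ⟨v, hv, hv_good⟩ := exists_mem_notMem_of_card_lt_card card_all_spoiled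
  refine ⟨v, hv, fun i hi hmem => hv_good (mem_biUnion.2 ⟨i, mem_range.2 hi, ?_⟩)⟩
  exact mem_filter.2 ⟨hv, hmem⟩

theorem window_three_consecutive_honest_general
    (f : ℕ)
    (B : Finset (Fin (3 * f + 1))) (hB : B.card ≤ f) :
    ∀ a : ℕ, ∃ v : ℕ, a ≤ v ∧ v + 2 ≤ a + 3 * f + 2 ∧
      leader f v ∉ B ∧ leader f (v + 1) ∉ B ∧ leader f (v + 2) ∉ B := by
  intro a
  obtain ⟨v, hv, honest⟩ :=
    exists_mem_Ico_forall_add_notMem (leader f) (leader_injOn_Ico f) B (k := 3) (by omega) a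
  obtain ⟨hav, hva⟩ := mem_Ico.1 hv
  exact ⟨v, hav, by omega, honest 0 (by omega), honest 1 (by omega), honest 2 (by omega)⟩

theorem window_three_consecutive_honest
    (f : ℕ) (hf : 1 ≤ f)
    (B : Finset (Fin (3 * f + 1))) (hB : B.card ≤ f) :
    ∀ a : ℕ, ∃ v : ℕ, a ≤ v ∧ v + 2 ≤ a + 3 * f + 2 ∧
      leader f v ∉ B ∧ leader f (v + 1) ∉ B ∧ leader f (v + 2) ∉ B :=
  window_three_consecutive_honest_general f B hB
end

section
/- Let f be a natural number with f ≥ 1, let B ⊆ Fin (3f+1) be a finite set with |B| ≤ f, and define the leader of view v ∈ ℕ to be v mod (3f+1). Then the set of views v ∈ ℕ such that the leaders of views v, v+1, and v+2 are all outside B is infinite. -/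
/-!
A view `v` fails to start an honest trio only if `v mod (3f+1)` lies in `B - {0, 1, 2}`, a set of
at most `3f` residues; so some residue starts an honest trio, and it recurs every `3f+1` views.
-/

open Finset Pointwise Fin.NatCast

/-- Every `i` with some `i + s ∈ B` lies in `B - S`, which has at most `#B * #S` elements. -/
theorem exists_forall_add_notMem_of_card_mul_lt {G : Type*} [AddGroup G] [Fintype G]
    [DecidableEq G] (B S : Finset G) (h : #B * #S < Fintype.card G) :
    ∃ i : G, ∀ s ∈ S, i + s ∉ B := by
  obtain ⟨i, hi⟩ : ∃ i, i ∉ B - S := by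
    by_contra! hall
    have := card_sub_le (s := B) (t := S)
    rw [eq_univ_of_forall hall, card_univ] at this
    omega
  exact ⟨i, fun s hs hmem => hi (mem_sub.2 ⟨i + s, hmem, s, hs, add_sub_cancel_right i s⟩)⟩

theorem Fin.exists_three_consecutive_notMem {n : ℕ} [NeZero n] (B : Finset (Fin n))
    (h : 3 * #B < n) : ∃ i : Fin n, i ∉ B ∧ i + 1 ∉ B ∧ i + 2 ∉ B := by
  have hS : #B * #({0, 1, 2} : Finset (Fin n)) < Fintype.card (Fin n) := by
    have := card_le_three (a := (0 : Fin n)) (b := 1) (c := 2)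
    rw [Fintype.card_fin]
    nlinarith
  obtain ⟨i, hi⟩ := exists_forall_add_notMem_of_card_mul_lt B _ hS
  exact ⟨i, by simpa using hi 0, hi 1 (by simp), hi 2 (by simp)⟩

theorem Fin.setOf_natCast_infinite {n : ℕ} [NeZero n] {p : Fin n → Prop} {i : Fin n}
    (hi : p i) : {v : ℕ | p v}.Infinite := by
  refine Nat.frequently_atTop_iff_infinite.1 ((Nat.frequently_modEq (NeZero.ne n) i).mono ?_)
  intro v hv
  have hcast : (v : Fin n) = i := Fin.ext (by rw [Fin.val_natCast, hv, Nat.mod_eq_of_lt i.isLt])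
  rwa [hcast]

theorem leader_eq_natCast (f v : ℕ) : leader f v = (v : Fin (3 * f + 1)) :=
  Fin.ext (Fin.val_natCast v (3 * f + 1)).symm

theorem infinitely_many_honest_trios_general
    (f : ℕ)
    (B : Finset (Fin (3 * f + 1))) (hB : B.card ≤ f) :
    {v : ℕ | leader f v ∉ B ∧ leader f (v + 1) ∉ B ∧ leader f (v + 2) ∉ B}.Infinite := by
  simp only [leader_eq_natCast, Nat.cast_add, Nat.cast_one, Nat.cast_ofNat]
  obtain ⟨i, hi⟩ := Fin.exists_three_consecutive_notMem B (by omega)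
  exact Fin.setOf_natCast_infinite (p := fun x => x ∉ B ∧ x + 1 ∉ B ∧ x + 2 ∉ B) hi

theorem infinitely_many_honest_trios
    (f : ℕ) (hf : 1 ≤ f)
    (B : Finset (Fin (3 * f + 1))) (hB : B.card ≤ f) :
    {v : ℕ | leader f v ∉ B ∧ leader f (v + 1) ∉ B ∧ leader f (v + 2) ∉ B}.Infinite :=
  infinitely_many_honest_trios_general f B hB
end
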